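/- arXiv:1704.03547 — 2 statements merged into one kernel-verified Lean document; each statement's English description precedes it below -/
import Mathlib

section
/- Let v1 and v2 be binary XOS valuations on [m], let k be a positive integer, and let (b_1,…,b_k) be a (k,1/2)-sketch of v1. Then (1/k) ∑_{j=1}^k SW*(b_j, v2) ≥ (3/4 − 1/k) · SW*(v1, v2). (Consequently, the simultaneous randomized protocol in which Alice reports a uniformly random clause of her (k,1/2)-sketch and the auctioneer gives Alice exactly the items in that clause is a (3/4 − 1/k)-approximation in expectation to the 2-party BXOS allocation problem.) -/
open Finset

/-- Value of a binary additive valuation (identified with the set `A`) on a bundle `S`. -/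
def bval {m : ℕ} (A S : Finset (Fin m)) : ℕ := (A ∩ S).card

/-- Value of a binary XOS valuation with clause set `V` on a bundle `S`. -/
def xval {m : ℕ} (V : Finset (Finset (Fin m))) (S : Finset (Fin m)) : ℕ :=
  V.sup fun C => (C ∩ S).card

/-- Optimal welfare between two (ℕ-valued) valuations on `[m]`. -/
def swB {m : ℕ} (v1 v2 : Finset (Fin m) → ℕ) : ℕ :=
  Finset.univ.sup fun S : Finset (Fin m) => v1 S + v2 Sᶜ

/-- `x_i`: the fraction of the `k` sketch clauses `b` containing item `i`. -/
noncomputable def sketchX {m k : ℕ} (b : Fin k → Finset (Fin m)) (i : Fin m) : ℝ :=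
  (∑ j, if i ∈ b j then (1 : ℝ) else 0) / k

/-- The objective `∑ i (x_i − α x_i²)` that a `(k,α)`-sketch maximizes. -/
noncomputable def sketchObj {m k : ℕ} (α : ℝ) (b : Fin k → Finset (Fin m)) : ℝ :=
  ∑ i, (sketchX b i - α * (sketchX b i) ^ 2)

/-- `(b_1,…,b_k)` is a `(k,α)`-sketch of the binary XOS valuation with clause set `V`. -/
def IsSketch {m k : ℕ} (α : ℝ) (V : Finset (Finset (Fin m)))
    (b : Fin k → Finset (Fin m)) : Prop :=
  (∀ j, b j ∈ V) ∧
    ∀ c : Fin k → Finset (Fin m), (∀ j, c j ∈ V) → sketchObj α c ≤ sketchObj α b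

/-!
Fix an optimal allocation `S`, a clause `A ∈ V1` attaining `v1(S)`, a clause `B ∈ V2` attaining
`v2(Sᶜ)`, and put `Q = B ∩ Sᶜ`, so that `SW* = |A ∩ S| + |Q|`. Giving Bob `Q` against every
sketch clause shows that the protocol earns at least `∑_{i ∉ Q} x_i + |Q|`.

Since the sketch cannot be improved by replacing any single clause by `A`, averaging these
`k` exchange inequalities gives the first-order condition
`∑ᵢ (aᵢ - xᵢ)(1 - xᵢ) ≤ ε ∑ᵢ |aᵢ - xᵢ|` with `ε = 1/(2k)` (for binary `aᵢ`,
`|aᵢ - xᵢ| = aᵢ + xᵢ - 2aᵢxᵢ`). Adding the first-order condition to `1 + ε` times the welfare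
deficit `∑_{i ∉ Q} x_i + |Q| - (3/4 - 2ε)·SW*` leaves, item by item, a quadratic in `xᵢ` that is
nonnegative on `[0, 1]` in each of the five possible membership patterns of an item.
-/

section Indicator

variable {ι : Type*} [DecidableEq ι]

def ind (s : Finset ι) (i : ι) : ℝ := if i ∈ s then 1 else 0

theorem ind_nonneg (s : Finset ι) (i : ι) : 0 ≤ ind s i := by
  unfold ind; split_ifs <;> norm_num

theorem ind_le_one (s : Finset ι) (i : ι) : ind s i ≤ 1 := by
  unfold ind; split_ifs <;> norm_num

theorem sub_ind_sq (s t : Finset ι) (i : ι) :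
    (ind s i - ind t i) ^ 2 = ind s i + ind t i - 2 * ind s i * ind t i := by
  unfold ind; split_ifs <;> norm_num

theorem sum_ind [Fintype ι] (s : Finset ι) : ∑ i, ind s i = #s := by
  simp [ind]

end Indicator

section Sketch

variable {m k : ℕ}

theorem sum_ind_eq_mul_sketchX (hk : k ≠ 0) (b : Fin k → Finset (Fin m)) (i : Fin m) :
    ∑ j, ind (b j) i = k * sketchX b i := by
  rw [sketchX, mul_div_cancel₀ _ (Nat.cast_ne_zero.2 hk)]
  rfl

theorem sketchX_nonneg (b : Fin k → Finset (Fin m)) (i : Fin m) : 0 ≤ sketchX b i :=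
  div_nonneg (Finset.sum_nonneg fun j _ => ind_nonneg (b j) i) k.cast_nonneg

theorem sketchX_le_one (b : Fin k → Finset (Fin m)) (i : Fin m) : sketchX b i ≤ 1 := by
  refine div_le_one_of_le₀ ?_ k.cast_nonneg
  calc ∑ j, ind (b j) i ≤ ∑ _j : Fin k, (1 : ℝ) := Finset.sum_le_sum fun j _ => ind_le_one _ _
    _ = k := by simp

theorem sketchX_update (b : Fin k → Finset (Fin m)) (j : Fin k) (A : Finset (Fin m))
    (i : Fin m) :
    sketchX (Function.update b j A) i = sketchX b i + (ind A i - ind (b j) i) / k := by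
  have h : ∀ c : Fin k → Finset (Fin m), sketchX c i = (∑ j', ind (c j') i) / k := fun _ => rfl
  rw [h, h, ← add_div]
  congr 1
  have hrest : ∑ j' ∈ univ.erase j, ind (Function.update b j A j') i
      = ∑ j' ∈ univ.erase j, ind (b j') i :=
    Finset.sum_congr rfl fun j' hj' => by rw [Function.update_of_ne (Finset.ne_of_mem_erase hj')]
  rw [← Finset.add_sum_erase _ _ (mem_univ j), ← Finset.add_sum_erase _ _ (mem_univ j),
    Function.update_self, hrest]
  ring

theorem IsSketch.sketchObj_update_le {α : ℝ} {V : Finset (Finset (Fin m))}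
    {b : Fin k → Finset (Fin m)} (hb : IsSketch α V b) (j : Fin k) {A : Finset (Fin m)}
    (hA : A ∈ V) : sketchObj α (Function.update b j A) ≤ sketchObj α b := by
  refine hb.2 _ fun j' => ?_
  rcases eq_or_ne j' j with rfl | h
  · simpa using hA
  · simpa [h] using hb.1 j'

theorem sketchObj_sub_sketchObj_update (α : ℝ) (b : Fin k → Finset (Fin m)) (j : Fin k)
    (A : Finset (Fin m)) :
    sketchObj α b - sketchObj α (Function.update b j A) =
      ∑ i, (α * ((ind A i - ind (b j) i) / k) ^ 2
        - (ind A i - ind (b j) i) / k * (1 - 2 * α * sketchX b i)) := by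
  simp only [sketchObj, sketchX_update, ← Finset.sum_sub_distrib]
  exact Finset.sum_congr rfl fun i _ => by ring

theorem sum_sketchObj_sub_sketchObj_update (hk : k ≠ 0) (α : ℝ) (b : Fin k → Finset (Fin m))
    (A : Finset (Fin m)) (i : Fin m) :
    ∑ j, (α * ((ind A i - ind (b j) i) / k) ^ 2
        - (ind A i - ind (b j) i) / k * (1 - 2 * α * sketchX b i)) =
      α / k * (ind A i + sketchX b i - 2 * ind A i * sketchX b i)
        - (ind A i - sketchX b i) * (1 - 2 * α * sketchX b i) := by
  set a := ind A i
  set x := sketchX b i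
  have hk' : (k : ℝ) ≠ 0 := Nat.cast_ne_zero.2 hk
  have hlin : ∀ j, α * ((a - ind (b j) i) / k) ^ 2 - (a - ind (b j) i) / k * (1 - 2 * α * x) =
      (α * a / k ^ 2 - a * (1 - 2 * α * x) / k)
        + (α * (1 - 2 * a) / k ^ 2 + (1 - 2 * α * x) / k) * ind (b j) i := by
    intro j
    rw [div_pow, sub_ind_sq]
    ring
  rw [Finset.sum_congr rfl fun j _ => hlin j, Finset.sum_add_distrib, ← Finset.mul_sum,
    sum_ind_eq_mul_sketchX hk, Finset.sum_const, Finset.card_univ, Fintype.card_fin,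
    nsmul_eq_mul]
  field_simp
  ring

theorem IsSketch.sum_mul_le (hk : k ≠ 0) {α : ℝ} {V : Finset (Finset (Fin m))}
    {b : Fin k → Finset (Fin m)} (hb : IsSketch α V b) {A : Finset (Fin m)} (hA : A ∈ V) :
    ∑ i, (ind A i - sketchX b i) * (1 - 2 * α * sketchX b i) ≤
      α / k * ∑ i, (ind A i + sketchX b i - 2 * ind A i * sketchX b i) := by
  have h : 0 ≤ ∑ j, (sketchObj α b - sketchObj α (Function.update b j A)) :=
    Finset.sum_nonneg fun j _ => sub_nonneg.2 (hb.sketchObj_update_le j hA)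
  simp only [sketchObj_sub_sketchObj_update] at h
  rw [Finset.sum_comm] at h
  rw [Finset.sum_congr rfl fun i _ => sum_sketchObj_sub_sketchObj_update hk α b A i,
    Finset.sum_sub_distrib, ← Finset.mul_sum] at h
  linarith

end Sketch

theorem three_quarters_mul_card_le_sum {ι : Type*} [Fintype ι] [DecidableEq ι] {ε : ℝ}
    (hε0 : 0 ≤ ε) (hε : ε ≤ 1 / 2) {x : ι → ℝ} (hx0 : ∀ i, 0 ≤ x i) (hx1 : ∀ i, x i ≤ 1)
    {A P Q : Finset ι} (hPA : P ⊆ A) (hPQ : Disjoint P Q)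
    (hx : ∑ i, (ind A i - x i) * (1 - x i) ≤ ε * ∑ i, (ind A i + x i - 2 * ind A i * x i)) :
    (3 / 4 - 2 * ε) * (#P + #Q) ≤ ∑ i, if i ∈ Q then 1 else x i := by
  have hitem : ∀ i, 0 ≤
      (1 + ε) * ((if i ∈ Q then 1 else x i) - (3 / 4 - 2 * ε) * (ind P i + ind Q i))
        + ((ind A i - x i) * (1 - x i) - ε * (ind A i + x i - 2 * ind A i * x i)) := by
    intro i
    have hx0i := hx0 i
    have hx1i := hx1 i
    by_cases hQ : i ∈ Q
    · have hP : i ∉ P := Finset.disjoint_right.1 hPQ hQ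
      by_cases hA : i ∈ A <;> simp [ind, hQ, hP, hA] <;>
        nlinarith [sq_nonneg (x i - (1 + ε) / 2)]
    · by_cases hP : i ∈ P
      · simp [ind, hQ, hP, hPA hP]
        nlinarith [sq_nonneg (x i - 1 / 2), mul_nonneg hε0 hx0i]
      · by_cases hA : i ∈ A <;> simp [ind, hQ, hP, hA] <;>
          nlinarith [sq_nonneg (x i + ε - 1 / 2)]
  have hsum := Finset.sum_nonneg fun i (_ : i ∈ univ) => hitem i
  rw [Finset.sum_add_distrib, ← Finset.mul_sum, Finset.sum_sub_distrib, ← Finset.mul_sum,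
    Finset.sum_add_distrib, sum_ind, sum_ind, Finset.sum_sub_distrib, ← Finset.mul_sum] at hsum
  have hdeficit :
      0 ≤ (1 + ε) * ((∑ i, if i ∈ Q then 1 else x i) - (3 / 4 - 2 * ε) * (#P + #Q)) := by
    linarith
  exact sub_nonneg.1 ((mul_nonneg_iff_of_pos_left (by linarith)).1 hdeficit)

section Welfare

variable {m k : ℕ}

theorem exists_swB_xval_eq {V1 V2 : Finset (Finset (Fin m))} (hV1 : V1.Nonempty)
    (hV2 : V2.Nonempty) :
    ∃ S, ∃ A ∈ V1, ∃ B ∈ V2, swB (xval V1) (xval V2) = #(A ∩ S) + #(B ∩ Sᶜ) := by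
  obtain ⟨S, -, hS⟩ := Finset.exists_mem_eq_sup univ univ_nonempty
    fun T : Finset (Fin m) => xval V1 T + xval V2 Tᶜ
  obtain ⟨A, hA, hAS⟩ := Finset.exists_mem_eq_sup V1 hV1 fun C => #(C ∩ S)
  obtain ⟨B, hB, hBS⟩ := Finset.exists_mem_eq_sup V2 hV2 fun C => #(C ∩ Sᶜ)
  exact ⟨S, A, hA, B, hB, by rw [swB, hS, xval, xval, hAS, hBS]⟩

theorem card_inter_compl_add_card_le_swB (c : Finset (Fin m)) {V : Finset (Finset (Fin m))}
    {B : Finset (Fin m)} (hB : B ∈ V) (T : Finset (Fin m)) :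
    #(c ∩ Tᶜ) + #(B ∩ T) ≤ swB (bval c) (xval V) := by
  calc #(c ∩ Tᶜ) + #(B ∩ T) ≤ bval c Tᶜ + xval V Tᶜᶜ := by
        rw [compl_compl]
        exact Nat.add_le_add_left (Finset.le_sup (f := fun C => #(C ∩ T)) hB) _
    _ ≤ swB (bval c) (xval V) := Finset.le_sup (f := fun T => bval c T + xval V Tᶜ) (mem_univ _)

theorem sum_ite_ind_eq_card (c Q : Finset (Fin m)) :
    ∑ i, (if i ∈ Q then 1 else ind c i) = #(c ∩ Qᶜ) + #Q := by
  rw [← sum_ind, ← sum_ind, ← Finset.sum_add_distrib]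
  refine Finset.sum_congr rfl fun i _ => ?_
  by_cases hQ : i ∈ Q <;> simp [ind, hQ]

theorem sum_ite_sketchX_le (hk : k ≠ 0) (b : Fin k → Finset (Fin m))
    {V : Finset (Finset (Fin m))} {B Q : Finset (Fin m)} (hB : B ∈ V) (hQB : Q ⊆ B) :
    ∑ i, (if i ∈ Q then 1 else sketchX b i) ≤ 1 / k * ∑ j, (swB (bval (b j)) (xval V) : ℝ) := by
  have hk' : (0 : ℝ) < k := Nat.cast_pos.2 (Nat.pos_of_ne_zero hk)
  have hcol : ∀ i, ∑ j, (if i ∈ Q then 1 else ind (b j) i) =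
      k * if i ∈ Q then 1 else sketchX b i := by
    intro i
    split_ifs
    · simp
    · exact sum_ind_eq_mul_sketchX hk b i
  have hrow : ∀ j, ∑ i, (if i ∈ Q then 1 else ind (b j) i) ≤ (swB (bval (b j)) (xval V) : ℝ) := by
    intro j
    rw [sum_ite_ind_eq_card]
    exact_mod_cast Finset.inter_eq_right.2 hQB ▸ card_inter_compl_add_card_le_swB (b j) hB Q
  rw [one_div_mul_eq_div, le_div_iff₀' hk', Finset.mul_sum,
    ← Finset.sum_congr rfl fun i _ => hcol i, Finset.sum_comm]
  exact Finset.sum_le_sum fun j _ => hrow j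

end Welfare

/-- if `(b_1,…,b_k)` is a `(k,1/2)`-sketch of the binary XOS valuation `v1`,
then `(1/k) ∑_j SW*(b_j, v2) ≥ (3/4 − 1/k) · SW*(v1, v2)`; this is the
`(3/4 − 1/k)`-approximation guarantee of the simultaneous randomized protocol. -/
theorem stmt6 {m k : ℕ} (hk : 0 < k)
    (V1 V2 : Finset (Finset (Fin m))) (hV1 : V1.Nonempty) (hV2 : V2.Nonempty)
    (b : Fin k → Finset (Fin m)) (hb : IsSketch (1 / 2 : ℝ) V1 b) :
    (1 / k : ℝ) * ∑ j, (swB (bval (b j)) (xval V2) : ℝ)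
      ≥ (3 / 4 - 1 / k : ℝ) * (swB (xval V1) (xval V2) : ℝ) := by
  obtain ⟨S, A, hA, B, hB, hopt⟩ := exists_swB_xval_eq hV1 hV2
  have hk1 : (1 : ℝ) ≤ k := Nat.one_le_cast.2 hk
  have hfirst := hb.sum_mul_le hk.ne' hA
  have hbound := three_quarters_mul_card_le_sum (ε := 1 / (2 * k)) (by positivity)
    (by rw [div_le_div_iff₀ (by positivity) two_pos]; linarith)
    (sketchX_nonneg b) (sketchX_le_one b) (P := A ∩ S) (Q := B ∩ Sᶜ) inter_subset_left
    (disjoint_compl_right.mono inter_subset_right inter_subset_right)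
    (by convert hfirst using 2 <;> norm_num [div_div])
  have hwelfare := sum_ite_sketchX_le hk.ne' b hB (Q := B ∩ Sᶜ) inter_subset_left
  rw [hopt, ge_iff_le]
  push_cast
  calc (3 / 4 - 1 / k : ℝ) * (#(A ∩ S) + #(B ∩ Sᶜ))
      = (3 / 4 - 2 * (1 / (2 * k))) * (#(A ∩ S) + #(B ∩ Sᶜ)) := by field_simp
    _ ≤ _ := hbound
    _ ≤ _ := hwelfare
end

section
/- Let v1 and v2 be XOS valuations on [m], let k be a positive integer, and let (b_1,…,b_k) be a (k,1/2)-sketch of v1. Then (1/k) ∑_{j=1}^k SW*(b_j, v2) ≥ (3/4 − 1/k) · SW*(v1, v2); in particular max_{j ∈ [k]} SW*(b_j, v2) ≥ (3/4 − 1/k) · SW*(v1, v2), so the two-round deterministic protocol in which Alice sends her (k,1/2)-sketch and Bob reports the best allocation against one of its clauses is a (3/4 − 1/k)-approximation to the 2-party XOS allocation problem and the 2-party XOS decision problem. -/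
/-!
Let `a` and `c` be clauses of `v1` and `v2` that realise an optimal allocation, so that
`SW*(v1, v2) ≤ ∑ᵢ max (aᵢ, cᵢ)`, and write every value as the integral of its layers
`u ↦ 1[u ≤ value]`. At a threshold `u` and item `i`, put `A = 1[u ≤ aᵢ]`, `C = 1[u ≤ cᵢ]` and let
`x` be the fraction of sketch clauses with `u ≤ b_j(i)`. Then
`3/4 · max (A, C) ≤ C + (1 - C) x + (A - x)(1 - x)`: the four cases reduce to `x² ≥ 0` and
`1 - x + x² ≥ 3/4`. Integrated and summed, `C + (1 - C) x` gives `(1/k) ∑ⱼ ∑ᵢ max (b_j(i), cᵢ)`,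
which is at most the average of `SW*(b_j, v2)`. Integrated and summed, `(A - x)(1 - x)` exceeds
the total gain of the sketch objective over the `k` swaps `b_j ↦ a` by at most `SW*/k`, and each
of these gains is nonpositive because the sketch is optimal.
-/

open Finset MeasureTheory

/-- Value of an additive valuation `a : Fin m → ℝ` on a bundle `S`. -/
noncomputable def aval {m : ℕ} (a : Fin m → ℝ) (S : Finset (Fin m)) : ℝ := ∑ i ∈ S, a i

/-- Value of an XOS valuation with (nonempty list of) additive clauses `C` on a bundle `S`. -/
noncomputable def xosVal {m t : ℕ} (C : Fin (t + 1) → Fin m → ℝ) (S : Finset (Fin m)) : ℝ :=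
  Finset.univ.sup' Finset.univ_nonempty fun j => aval (C j) S

/-- Optimal welfare between two (ℝ-valued) valuations on `[m]`. -/
noncomputable def swR {m : ℕ} (v1 v2 : Finset (Fin m) → ℝ) : ℝ :=
  Finset.univ.sup' Finset.univ_nonempty fun S : Finset (Fin m) => v1 S + v2 Sᶜ

/-- `x_{i,u}`: the fraction of the `k` sketch clauses `b` whose value for item `i` is `≥ u`. -/
noncomputable def rX {m k : ℕ} (b : Fin k → Fin m → ℝ) (i : Fin m) (u : ℝ) : ℝ :=
  (∑ j, if u ≤ b j i then (1 : ℝ) else 0) / k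

/-- The objective `∑ i ∫₀^∞ (x_{i,u} − α x_{i,u}²) du` that a `(k,α)`-sketch of an XOS
valuation maximizes. -/
noncomputable def rObj {m k : ℕ} (α : ℝ) (b : Fin k → Fin m → ℝ) : ℝ :=
  ∑ i, ∫ u in Set.Ioi (0 : ℝ), (rX b i u - α * (rX b i u) ^ 2)

/-- `(C (σ 1),…,C (σ k))` is a `(k,α)`-sketch of the XOS valuation with clauses `C`. -/
def IsSketchR {m t k : ℕ} (α : ℝ) (C : Fin (t + 1) → Fin m → ℝ)
    (σ : Fin k → Fin (t + 1)) : Prop :=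
  ∀ τ : Fin k → Fin (t + 1), rObj α (fun j => C (τ j)) ≤ rObj α (fun j => C (σ j))

noncomputable def layer (v u : ℝ) : ℝ := if u ≤ v then 1 else 0

lemma layer_eq_indicator (v : ℝ) : layer v = (Set.Iic v).indicator 1 := by
  ext u; simp [layer, Set.indicator]

lemma layer_eq_zero_or_one (v u : ℝ) : layer v u = 0 ∨ layer v u = 1 := by
  unfold layer; split_ifs <;> simp

lemma layer_nonneg (v u : ℝ) : 0 ≤ layer v u := by
  unfold layer; split_ifs <;> simp

lemma layer_le_one (v u : ℝ) : layer v u ≤ 1 := by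
  unfold layer; split_ifs <;> simp

lemma layer_max (v w u : ℝ) : layer (max v w) u = max (layer v u) (layer w u) := by
  unfold layer; split_ifs <;> simp_all

lemma integrableOn_layer (v : ℝ) : IntegrableOn (layer v) (Set.Ioi 0) := by
  rw [layer_eq_indicator, IntegrableOn, integrable_indicator_iff measurableSet_Iic]
  exact integrableOn_const (by simp [Measure.restrict_apply measurableSet_Iic, Set.Iic_inter_Ioi])

lemma setIntegral_layer {v : ℝ} (hv : 0 ≤ v) : ∫ u in Set.Ioi 0, layer v u = v := by
  rw [layer_eq_indicator, setIntegral_indicator measurableSet_Iic, Set.Ioi_inter_Iic]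
  simp [hv]

lemma sum_comp_of_zero_or_one {ι : Type*} (s : Finset ι) {B : ι → ℝ}
    (hB : ∀ j ∈ s, B j = 0 ∨ B j = 1) (g : ℝ → ℝ) :
    ∑ j ∈ s, g (B j) = #s * g 0 + (g 1 - g 0) * ∑ j ∈ s, B j := by
  rw [mul_sum, card_eq_sum_ones, Nat.cast_sum, sum_mul, ← sum_add_distrib]
  refine sum_congr rfl fun j hj => ?_
  rcases hB j hj with h | h <;> simp [h]

-- The layers at one threshold `u`: `A`, `C`, `B j` are the indicators of `u ≤ aᵢ`, `u ≤ cᵢ`,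
-- `u ≤ b_j(i)`, and the last sum is the total gain of the `k` swaps `b_j ↦ a` in the integrand
-- of the sketch objective.
lemma three_quarters_max_le {k : ℕ} (hk : 0 < k) {A C x : ℝ} (hA : A = 0 ∨ A = 1)
    (hC : C = 0 ∨ C = 1) {B : Fin k → ℝ} (hB : ∀ j, B j = 0 ∨ B j = 1)
    (hx : ∑ j, B j = k * x) :
    3 / 4 * max A C ≤ (∑ j, max (B j) C) / k + (A + x) / (2 * k)
      + ∑ j, ((x + (A - B j) / k) - 1 / 2 * (x + (A - B j) / k) ^ 2 - (x - 1 / 2 * x ^ 2)) := by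
  have hK : (0 : ℝ) < k := Nat.cast_pos.2 hk
  have hB' : ∀ j ∈ univ, B j = 0 ∨ B j = 1 := fun j _ => hB j
  have hx0 : 0 ≤ x := by
    have : 0 ≤ ∑ j, B j := sum_nonneg fun j _ => by rcases hB j with h | h <;> simp [h]
    nlinarith
  have hmax : ∑ j, max (B j) C = k * (C + (1 - C) * x) := by
    rw [sum_comp_of_zero_or_one univ hB' (fun t => max t C), hx, card_univ, Fintype.card_fin]
    rcases hC with rfl | rfl <;> norm_num
  have hswap : ∑ j, ((x + (A - B j) / k) - 1 / 2 * (x + (A - B j) / k) ^ 2 - (x - 1 / 2 * x ^ 2))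
      = (A - x) * (1 - x) - (A + x - 2 * A * x) / (2 * k) := by
    rw [sum_comp_of_zero_or_one univ hB' (fun t => (x + (A - t) / k) - 1 / 2 * (x + (A - t) / k) ^ 2
      - (x - 1 / 2 * x ^ 2)), hx, card_univ, Fintype.card_fin]
    rcases hA with rfl | rfl <;> field_simp <;> ring
  have hrhs : k * (C + (1 - C) * x) / k + (A + x) / (2 * k)
      + ((A - x) * (1 - x) - (A + x - 2 * A * x) / (2 * k))
      = C + (1 - C) * x + (A - x) * (1 - x) + A * x / k := by
    field_simp; ring
  rw [hmax, hswap, hrhs]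
  rcases hA with rfl | rfl <;> rcases hC with rfl | rfl <;> norm_num <;>
    nlinarith [sq_nonneg (x - 1 / 2), div_nonneg hx0 hK.le]

section rX

variable {m k : ℕ} (b : Fin k → Fin m → ℝ) (i : Fin m)

lemma rX_eq_sum_layer (u : ℝ) : rX b i u = (∑ j, layer (b j i) u) / k := rfl

lemma rX_nonneg (u : ℝ) : 0 ≤ rX b i u :=
  div_nonneg (sum_nonneg fun j _ => layer_nonneg (b j i) u) k.cast_nonneg

lemma rX_le_one (u : ℝ) : rX b i u ≤ 1 := by
  refine div_le_one_of_le₀ ?_ k.cast_nonneg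
  calc ∑ j, layer (b j i) u ≤ ∑ _j : Fin k, (1 : ℝ) :=
        sum_le_sum fun j _ => layer_le_one (b j i) u
    _ = k := by simp

lemma integrableOn_rX : IntegrableOn (rX b i) (Set.Ioi 0) :=
  (integrable_finsetSum _ fun j _ => integrableOn_layer (b j i)).div_const _

lemma setIntegral_rX (hb : ∀ j, 0 ≤ b j i) : ∫ u in Set.Ioi 0, rX b i u = (∑ j, b j i) / k := by
  simp only [rX_eq_sum_layer]
  rw [integral_div, integral_finsetSum _ fun j _ => integrableOn_layer (b j i)]
  simp only [setIntegral_layer (hb _)]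

lemma integrableOn_rObj_integrand (α : ℝ) :
    IntegrableOn (fun u => rX b i u - α * rX b i u ^ 2) (Set.Ioi 0) := by
  have hx := integrableOn_rX b i
  refine hx.sub (Integrable.const_mul ?_ α)
  refine hx.mono' (hx.aestronglyMeasurable.pow 2) (ae_of_all _ fun u => ?_)
  have h0 := rX_nonneg b i u
  have h1 := rX_le_one b i u
  rw [Real.norm_eq_abs, abs_of_nonneg (by positivity)]
  nlinarith

lemma rX_update (j₀ : Fin k) (a : Fin m → ℝ) (u : ℝ) :
    rX (Function.update b j₀ a) i u = rX b i u + (layer (a i) u - layer (b j₀ i) u) / k := by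
  simp only [rX_eq_sum_layer, ← add_div]
  congr 1
  rw [← Finset.add_sum_erase _ _ (mem_univ j₀), ← Finset.add_sum_erase _ _ (mem_univ j₀),
    Function.update_self]
  have : ∑ j ∈ univ.erase j₀, layer (Function.update b j₀ a j i) u
      = ∑ j ∈ univ.erase j₀, layer (b j i) u :=
    sum_congr rfl fun j hj => by rw [Function.update_of_ne (ne_of_mem_erase hj)]
  rw [this]; ring

end rX

lemma three_quarters_max_le_setIntegral {m k : ℕ} (hk : 0 < k) (b : Fin k → Fin m → ℝ)
    (a c : Fin m → ℝ) (hb : ∀ j i, 0 ≤ b j i) (ha : ∀ i, 0 ≤ a i) (i : Fin m) :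
    3 / 4 * max (a i) (c i) ≤ (∑ j, max (b j i) (c i)) / k + (a i + (∑ j, b j i) / k) / (2 * k)
      + ∑ j₀, ((∫ u in Set.Ioi 0, (rX (Function.update b j₀ a) i u
            - 1 / 2 * rX (Function.update b j₀ a) i u ^ 2))
          - ∫ u in Set.Ioi 0, (rX b i u - 1 / 2 * rX b i u ^ 2)) := by
  have hgain : ∀ j₀ ∈ univ, IntegrableOn (fun u => (rX (Function.update b j₀ a) i u
      - 1 / 2 * rX (Function.update b j₀ a) i u ^ 2) - (rX b i u - 1 / 2 * rX b i u ^ 2))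
      (Set.Ioi 0) := fun j₀ _ =>
    (integrableOn_rObj_integrand _ i _).sub (integrableOn_rObj_integrand b i _)
  have hmax : IntegrableOn (fun u => (∑ j, layer (max (b j i) (c i)) u) / k) (Set.Ioi 0) :=
    (integrable_finsetSum _ fun j _ => integrableOn_layer _).div_const _
  have hlin : IntegrableOn (fun u => (layer (a i) u + rX b i u) / (2 * k)) (Set.Ioi 0) :=
    ((integrableOn_layer _).add (integrableOn_rX b i)).div_const _
  have hmax_lin : IntegrableOn (fun u => (∑ j, layer (max (b j i) (c i)) u) / k
      + (layer (a i) u + rX b i u) / (2 * k)) (Set.Ioi 0) := hmax.add hlin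
  calc 3 / 4 * max (a i) (c i)
      = ∫ u in Set.Ioi 0, 3 / 4 * layer (max (a i) (c i)) u := by
        rw [integral_const_mul, setIntegral_layer (le_max_of_le_left (ha i))]
    _ ≤ ∫ u in Set.Ioi 0, ((∑ j, layer (max (b j i) (c i)) u) / k
          + (layer (a i) u + rX b i u) / (2 * k)
          + ∑ j₀, ((rX (Function.update b j₀ a) i u - 1 / 2 * rX (Function.update b j₀ a) i u ^ 2)
            - (rX b i u - 1 / 2 * rX b i u ^ 2))) := by
        refine setIntegral_mono ((integrableOn_layer _).const_mul _)
          (hmax_lin.add (integrable_finsetSum _ hgain)) fun u => ?_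
        simp only [layer_max, rX_update]
        exact three_quarters_max_le hk (layer_eq_zero_or_one _ u) (layer_eq_zero_or_one _ u)
          (fun j => layer_eq_zero_or_one _ u) (by rw [rX_eq_sum_layer]; field_simp)
    _ = _ := by
        rw [integral_add hmax_lin (integrable_finsetSum _ hgain), integral_add hmax hlin,
          integral_finsetSum _ hgain, integral_div, integral_div,
          integral_add (integrableOn_layer _) (integrableOn_rX b i),
          integral_finsetSum _ fun j _ => integrableOn_layer _, setIntegral_layer (ha i),
          setIntegral_rX b i fun j => hb j i]
        simp only [setIntegral_layer (le_max_of_le_left (hb _ i))]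
        congr 1
        exact sum_congr rfl fun j₀ _ => integral_sub (integrableOn_rObj_integrand _ i _)
          (integrableOn_rObj_integrand b i _)

lemma three_quarters_sum_max_le {m k : ℕ} (hk : 0 < k) (b : Fin k → Fin m → ℝ)
    (a c : Fin m → ℝ) (hb : ∀ j i, 0 ≤ b j i) (ha : ∀ i, 0 ≤ a i) :
    3 / 4 * ∑ i, max (a i) (c i) ≤ (∑ j, ∑ i, max (b j i) (c i)) / k
      + (∑ i, a i + (∑ j, ∑ i, b j i) / k) / (2 * k)
      + ∑ j₀, (rObj (1 / 2) (Function.update b j₀ a) - rObj (1 / 2) b) := by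
  rw [mul_sum]
  refine (sum_le_sum fun i _ => three_quarters_max_le_setIntegral hk b a c hb ha i).trans_eq ?_
  unfold rObj
  simp only [sum_add_distrib, ← sum_div, ← sum_sub_distrib]
  rw [sum_comm (f := fun i j => max (b j i) (c i)), sum_comm (f := fun i j => b j i)]
  congr 1
  exact sum_comm

section Welfare

variable {m : ℕ}

lemma le_swR (v1 v2 : Finset (Fin m) → ℝ) (S : Finset (Fin m)) : v1 S + v2 Sᶜ ≤ swR v1 v2 :=
  le_sup' (fun S : Finset (Fin m) => v1 S + v2 Sᶜ) (mem_univ S)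

lemma aval_le_xosVal {t : ℕ} (C : Fin (t + 1) → Fin m → ℝ) (j : Fin (t + 1))
    (S : Finset (Fin m)) : aval (C j) S ≤ xosVal C S :=
  le_sup' (fun j => aval (C j) S) (mem_univ j)

lemma xosVal_empty {t : ℕ} (C : Fin (t + 1) → Fin m → ℝ) : xosVal C ∅ = 0 := by
  simp [xosVal, aval]

lemma sum_le_swR_xosVal {t1 t2 : ℕ} (C1 : Fin (t1 + 1) → Fin m → ℝ)
    (C2 : Fin (t2 + 1) → Fin m → ℝ) (j : Fin (t1 + 1)) :
    ∑ i, C1 j i ≤ swR (xosVal C1) (xosVal C2) := by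
  have h := le_swR (xosVal C1) (xosVal C2) univ
  rw [compl_univ, xosVal_empty, add_zero] at h
  exact (aval_le_xosVal C1 j univ).trans h

lemma exists_swR_xosVal_le_sum_max {t1 t2 : ℕ} (C1 : Fin (t1 + 1) → Fin m → ℝ)
    (C2 : Fin (t2 + 1) → Fin m → ℝ) :
    ∃ j1 j2, swR (xosVal C1) (xosVal C2) ≤ ∑ i, max (C1 j1 i) (C2 j2 i) := by
  obtain ⟨S, -, hS⟩ := exists_mem_eq_sup' univ_nonempty
    fun S : Finset (Fin m) => xosVal C1 S + xosVal C2 Sᶜ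
  obtain ⟨j1, -, hj1⟩ := exists_mem_eq_sup' univ_nonempty fun j => aval (C1 j) S
  obtain ⟨j2, -, hj2⟩ := exists_mem_eq_sup' univ_nonempty fun j => aval (C2 j) Sᶜ
  refine ⟨j1, j2, ?_⟩
  rw [swR, hS, xosVal, xosVal, hj1, hj2, aval, aval, ← sum_add_sum_compl S]
  exact add_le_add (sum_le_sum fun i _ => le_max_left _ _)
    (sum_le_sum fun i _ => le_max_right _ _)

lemma sum_max_le_swR_aval_xosVal {t : ℕ} (g : Fin m → ℝ) (C : Fin (t + 1) → Fin m → ℝ)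
    (j : Fin (t + 1)) : ∑ i, max (g i) (C j i) ≤ swR (aval g) (xosVal C) := by
  let S : Finset (Fin m) := {i | C j i ≤ g i}
  calc ∑ i, max (g i) (C j i) = aval g S + aval (C j) Sᶜ := by
        rw [aval, aval, ← sum_add_sum_compl S]
        congr 1
        · exact sum_congr rfl fun i hi => max_eq_left (mem_filter.1 hi).2
        · exact sum_congr rfl fun i hi => max_eq_right (le_of_lt (by simpa [S] using hi))
    _ ≤ aval g S + xosVal C Sᶜ := add_le_add le_rfl (aval_le_xosVal C j Sᶜ)
    _ ≤ swR (aval g) (xosVal C) := le_swR _ _ S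

end Welfare

lemma IsSketchR.rObj_update_le {m t k : ℕ} {α : ℝ} {C : Fin (t + 1) → Fin m → ℝ}
    {σ : Fin k → Fin (t + 1)} (hσ : IsSketchR α C σ) (j₀ : Fin k) (l : Fin (t + 1)) :
    rObj α (Function.update (fun j => C (σ j)) j₀ (C l)) ≤ rObj α (fun j => C (σ j)) := by
  have h := hσ (Function.update σ j₀ l)
  rwa [show (fun j => C (Function.update σ j₀ l j)) = Function.update (fun j => C (σ j)) j₀ (C l)
    from Function.comp_update C σ j₀ l] at h

lemma exists_le_of_le_mean {k : ℕ} (hk : 0 < k) {f : Fin k → ℝ} {c : ℝ}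
    (h : c ≤ 1 / k * ∑ j, f j) : ∃ j, c ≤ f j := by
  rw [one_div_mul_eq_div, le_div_iff₀' (Nat.cast_pos.2 hk)] at h
  obtain ⟨j, -, hj⟩ := exists_le_of_sum_le (f := fun _ => c) (g := f)
    (univ_nonempty_iff.2 ⟨⟨0, hk⟩⟩) (by simpa using h)
  exact ⟨j, hj⟩

theorem stmt11_general {m t1 t2 k : ℕ} (hk : 0 < k)
    (C1 : Fin (t1 + 1) → Fin m → ℝ) (C2 : Fin (t2 + 1) → Fin m → ℝ)
    (hC1 : ∀ j i, 0 ≤ C1 j i)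
    (σ : Fin k → Fin (t1 + 1)) (hσ : IsSketchR (1 / 2 : ℝ) C1 σ) :
    (1 / k : ℝ) * ∑ j, swR (aval (C1 (σ j))) (xosVal C2)
        ≥ (3 / 4 - 1 / k : ℝ) * swR (xosVal C1) (xosVal C2)
    ∧ ∃ j, swR (aval (C1 (σ j))) (xosVal C2)
        ≥ (3 / 4 - 1 / k : ℝ) * swR (xosVal C1) (xosVal C2) := by
  set OPT := swR (xosVal C1) (xosVal C2)
  have hK : (0 : ℝ) < k := Nat.cast_pos.2 hk
  obtain ⟨j1, j2, hOPT⟩ := exists_swR_xosVal_le_sum_max C1 C2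
  have hmain := three_quarters_sum_max_le hk (fun j => C1 (σ j)) (C1 j1) (C2 j2)
    (fun j => hC1 (σ j)) (hC1 j1)
  have hswap : ∑ j₀, (rObj (1 / 2) (Function.update (fun j => C1 (σ j)) j₀ (C1 j1))
      - rObj (1 / 2) (fun j => C1 (σ j))) ≤ 0 :=
    sum_nonpos fun j₀ _ => sub_nonpos.2 (hσ.rObj_update_le j₀ j1)
  have hwelfare : (∑ j, ∑ i, max (C1 (σ j) i) (C2 j2 i)) / k
      ≤ (∑ j, swR (aval (C1 (σ j))) (xosVal C2)) / k :=
    div_le_div_of_nonneg_right (sum_le_sum fun j _ => sum_max_le_swR_aval_xosVal _ C2 j2) hK.le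
  have herror : (∑ i, C1 j1 i + (∑ j, ∑ i, C1 (σ j) i) / k) / (2 * k) ≤ OPT / k := by
    have hsketch : (∑ j, ∑ i, C1 (σ j) i) / k ≤ OPT := by
      rw [div_le_iff₀' hK]
      simpa using sum_le_sum fun j (_ : j ∈ univ) => sum_le_swR_xosVal C1 C2 (σ j)
    rw [div_le_div_iff₀ (by positivity) hK]
    nlinarith [sum_le_swR_xosVal C1 C2 j1]
  have hmean : (1 / k : ℝ) * ∑ j, swR (aval (C1 (σ j))) (xosVal C2) ≥ (3 / 4 - 1 / k) * OPT := by
    rw [one_div_mul_eq_div, sub_mul, one_div_mul_eq_div]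
    linarith
  exact ⟨hmean, exists_le_of_le_mean hk hmean⟩

/-- if `(b_1,…,b_k)` is a `(k,1/2)`-sketch of the XOS valuation `v1`, then
`(1/k) ∑_j SW*(b_j, v2) ≥ (3/4 − 1/k) · SW*(v1, v2)`; in particular some reported clause
`b_j` satisfies `SW*(b_j, v2) ≥ (3/4 − 1/k) · SW*(v1, v2)` (the two-round protocol
guarantee). -/
theorem stmt11 {m t1 t2 k : ℕ} (hk : 0 < k)
    (C1 : Fin (t1 + 1) → Fin m → ℝ) (C2 : Fin (t2 + 1) → Fin m → ℝ)
    (hC1 : ∀ j i, 0 ≤ C1 j i) (hC2 : ∀ j i, 0 ≤ C2 j i)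
    (σ : Fin k → Fin (t1 + 1)) (hσ : IsSketchR (1 / 2 : ℝ) C1 σ) :
    (1 / k : ℝ) * ∑ j, swR (aval (C1 (σ j))) (xosVal C2)
        ≥ (3 / 4 - 1 / k : ℝ) * swR (xosVal C1) (xosVal C2)
    ∧ ∃ j, swR (aval (C1 (σ j))) (xosVal C2)
        ≥ (3 / 4 - 1 / k : ℝ) * swR (xosVal C1) (xosVal C2) :=
  stmt11_general hk C1 C2 hC1 σ hσ
end
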